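/- Among all probability densities p on ℝ with ∫_S p = 1 - ε, the truncated-mixture correction q* of q minimizes KL(p ∥ q): for any such p absolutely continuous with respect to q, KL(p ∥ q) ≥ KL(q* ∥ q). -/
import Mathlib

open MeasureTheory Real Set Classical

lemma ite_int {S : Set ℝ} (hS : MeasurableSet S) (f : ℝ → ℝ) (hf : Integrable f) (a b : ℝ) :
    Integrable (fun x => if x ∈ S then a * f x else b * f x) ∧
    ∫ x, (if x ∈ S then a * f x else b * f x) = a * (∫ x in S, f x) + b * ∫ x in Sᶜ, f x := by
  have he : (fun x => if x ∈ S then a * f x else b * f x)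
      = fun x => S.indicator (fun y => a * f y) x + Sᶜ.indicator (fun y => b * f y) x := by
    funext x; by_cases hx : x ∈ S <;> simp [hx]
  have h1 : Integrable (S.indicator fun y => a * f y) := (hf.const_mul a).indicator hS
  have h2 : Integrable (Sᶜ.indicator fun y => b * f y) := (hf.const_mul b).indicator hS.compl
  constructor
  · rw [he]; exact h1.add h2
  · rw [he, integral_add h1 h2, integral_indicator hS, integral_indicator hS.compl,
      integral_const_mul, integral_const_mul]

lemma key_ineq (p q c : ℝ) (hp : 0 ≤ p) (hq : 0 ≤ q) (hc : 0 < c) (hpq : q = 0 → p = 0) :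
    Real.log c * p + (p - c * q) ≤ p * Real.log (p / q) := by
  rcases eq_or_lt_of_le hq with hq0 | hq0
  · have hp0 := hpq hq0.symm
    simp [← hq0, hp0]
  rcases eq_or_lt_of_le hp with hp0 | hp0
  · rw [← hp0]
    have h0 : 0 ≤ c * q := by positivity
    nlinarith
  · have h1 : Real.log ((c * q) / p) ≤ (c * q) / p - 1 :=
      Real.log_le_sub_one_of_pos (by positivity)
    have h2 : Real.log ((c * q) / p) = Real.log c + Real.log q - Real.log p := by
      rw [Real.log_div (by positivity) (ne_of_gt hp0),
        Real.log_mul (ne_of_gt hc) (ne_of_gt hq0)]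
    have h3 : Real.log (p / q) = Real.log p - Real.log q :=
      Real.log_div (ne_of_gt hp0) (ne_of_gt hq0)
    have h5 : p * (Real.log c + Real.log q - Real.log p) ≤ c * q - p := by
      have h6 := mul_le_mul_of_nonneg_left h1 hp0.le
      rw [h2] at h6
      have h7 : p * ((c * q) / p - 1) = c * q - p := by field_simp
      linarith
    rw [h3]; nlinarith [h5]

theorem correction_minimizes_kl
    (q : ℝ → ℝ) (hqm : Measurable q) (hq0 : ∀ x, 0 ≤ q x)
    (hqi : Integrable q) (hq1 : ∫ x, q x = 1)
    (S : Set ℝ) (hS : MeasurableSet S)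
    (Φ : ℝ) (hΦdef : Φ = ∫ x in S, q x) (hΦ0 : 0 < Φ) (hΦ1 : Φ < 1)
    (ε : ℝ) (hε0 : 0 < ε) (hε1 : ε < 1)
    (qstar : ℝ → ℝ)
    (hqs : ∀ x, qstar x =
      if x ∈ S then ((1 - ε) / Φ) * q x else (ε / (1 - Φ)) * q x)
    (p : ℝ → ℝ) (hpm : Measurable p) (hp0 : ∀ x, 0 ≤ p x)
    (hpi : Integrable p) (hp1 : ∫ x, p x = 1)
    (hpS : ∫ x in S, p x = 1 - ε)
    (hpac : ∀ᵐ x, q x = 0 → p x = 0)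
    (hklint : Integrable (fun x => p x * Real.log (p x / q x))) :
    ∫ x, qstar x * Real.log (qstar x / q x) ≤
      ∫ x, p x * Real.log (p x / q x) := by
  set c1 : ℝ := (1 - ε) / Φ with hc1def
  set c2 : ℝ := ε / (1 - Φ) with hc2def
  have hc1 : 0 < c1 := div_pos (by linarith) hΦ0
  have hc2 : 0 < c2 := div_pos hε0 (by linarith)
  -- complement integrals
  have hqc : ∫ x in Sᶜ, q x = 1 - Φ := by
    have h := integral_add_compl hS hqi
    rw [hq1] at h; rw [hΦdef]; linarith [h]
  have hpc : ∫ x in Sᶜ, p x = ε := by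
    have h := integral_add_compl hS hpi
    rw [hp1, hpS] at h; linarith [h]
  -- qstar as ite
  have hqstar_eq : qstar = fun x => if x ∈ S then c1 * q x else c2 * q x := funext hqs
  obtain ⟨hqsi, hqsint⟩ := ite_int hS q hqi c1 c2
  have hqstar_int : ∫ x, qstar x = 1 := by
    rw [hqstar_eq, hqsint, ← hΦdef, hqc, hc1def, hc2def,
      div_mul_cancel₀ _ (ne_of_gt hΦ0),
      div_mul_cancel₀ _ (ne_of_gt (show (1:ℝ) - Φ > 0 by linarith))]
    ring
  have hqstar_integrable : Integrable qstar := by rw [hqstar_eq]; exact hqsi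
  -- LHS rewrite
  have hLHS : (fun x => qstar x * Real.log (qstar x / q x))
      = fun x => if x ∈ S then (c1 * Real.log c1) * q x else (c2 * Real.log c2) * q x := by
    funext x
    rw [hqs]
    by_cases hx : x ∈ S
    · simp only [hx, if_true]
      by_cases hq : q x = 0
      · simp [hq]
      · rw [mul_div_assoc, div_self hq, mul_one]; ring
    · simp only [hx, if_false]
      by_cases hq : q x = 0
      · simp [hq]
      · rw [mul_div_assoc, div_self hq, mul_one]; ring
  obtain ⟨_, hLHSint⟩ := ite_int hS q hqi (c1 * Real.log c1) (c2 * Real.log c2)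
  have hLHSval : ∫ x, qstar x * Real.log (qstar x / q x)
      = (c1 * Real.log c1) * Φ + (c2 * Real.log c2) * (1 - Φ) := by
    rw [hLHS, hLHSint, ← hΦdef, hqc]
  -- the comparison function
  obtain ⟨hplint, hplval⟩ := ite_int hS p hpi (Real.log c1) (Real.log c2)
  have hsub : Integrable (fun x => p x - qstar x) := hpi.sub hqstar_integrable
  have hgint : Integrable (fun x =>
      (if x ∈ S then Real.log c1 * p x else Real.log c2 * p x) + (p x - qstar x)) :=
    hplint.add hsub
  have hae : ∀ᵐ x, (if x ∈ S then Real.log c1 * p x else Real.log c2 * p x) + (p x - qstar x)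
      ≤ p x * Real.log (p x / q x) := by
    filter_upwards [hpac] with x hx
    rw [hqs]
    by_cases hxS : x ∈ S
    · simp only [hxS, if_true]
      have := key_ineq (p x) (q x) c1 (hp0 x) (hq0 x) hc1 hx
      linarith
    · simp only [hxS, if_false]
      have := key_ineq (p x) (q x) c2 (hp0 x) (hq0 x) hc2 hx
      linarith
  have hmono := integral_mono_ae hgint hklint hae
  have hgval : ∫ x, ((if x ∈ S then Real.log c1 * p x else Real.log c2 * p x) + (p x - qstar x))
      = (Real.log c1 * (1 - ε) + Real.log c2 * ε) + (1 - 1) := by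
    rw [integral_add hplint hsub, hplval, hpS, hpc,
      integral_sub hpi hqstar_integrable, hp1, hqstar_int]
  rw [hgval] at hmono
  have e1 : c1 * Φ = 1 - ε := div_mul_cancel₀ _ (ne_of_gt hΦ0)
  have e2 : c2 * (1 - Φ) = ε := div_mul_cancel₀ _ (ne_of_gt (show (1:ℝ) - Φ > 0 by linarith))
  have : (c1 * Real.log c1) * Φ + (c2 * Real.log c2) * (1 - Φ)
      = Real.log c1 * (1 - ε) + Real.log c2 * ε + (1 - 1) := by
    linear_combination Real.log c1 * e1 + Real.log c2 * e2
  rw [hLHSval, this]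
  exact hmono
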